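/- Let M be a commutative idempotent monoid acting additively on an abelian group G, F : M → G a function satisfying the chain rule, and X_1, …, X_n ∈ M. Let K = (J, L_1, …, L_q) be a conditional partition of [n] with q ≥ 2 and set L = L_1 ∪ … ∪ L_q. Then the following are equivalent: (1) K induces an F-FCMI, i.e. X_{L_1}, …, X_{L_q} are mutually F-independent given X_J; (2) for all I ⊆ [q] with |I| ≥ 2: X_{J ∪ L ∖ L_I}.F(;_{i∈I} X_{L_i}) = 0, where L_I = ⋃_{i∈I} L_i; (3) for all I ⊆ [q] with |I| ≥ 2 and all families (W_i)_{i∈I} with ∅ ≠ W_i ⊆ L_i for each i ∈ I: X_{J ∪ L ∖ W_I}.F(;_{w∈W_I} X_w) = 0, where W_I = ⋃_{i∈I} W_i; (4) X_{[n]∖W}.F(;_{w∈W} X_w) = 0 for every atom p_W in the image IM(K). -/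

import Mathlib

namespace AMRF
/-- An additive monoid action of a commutative monoid `M` on an abelian group `G`. -/
structure MAction (M G : Type*) [CommMonoid M] [AddCommGroup G] where
  act : M → G → G
  act_one : ∀ g, act 1 g = g
  act_mul : ∀ X Y g, act X (act Y g) = act (X * Y) g
  act_add : ∀ X g h, act X (g + h) = act X g + act X h

variable {M G : Type*} [CommMonoid M] [AddCommGroup G]

/-- `F : M → G` satisfies the chain rule `F(XY) = F(X) + X.F(Y)`. -/
def ChainRule (A : MAction M G) (F : M → G) : Prop :=
  ∀ X Y : M, F (X * Y) = F X + A.act X (F Y)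

/-- Higher-order terms on a *reversed* argument list: the head of the list is the *last*
argument `Y_q` in `F_q(Y₁; …; Y_q)`. -/
def Fseq (A : MAction M G) (F : M → G) : List M → G
  | [] => 0
  | [Y] => F Y
  | Y :: Z :: l => Fseq A F (Z :: l) - A.act Y (Fseq A F (Z :: l))

/-- `Fof A F [Y₁, …, Y_q] = F_q(Y₁; …; Y_q)`, defined inductively by
`F_q(Y₁; …; Y_q) = F_{q−1}(Y₁; …; Y_{q−1}) − Y_q.F_{q−1}(Y₁; …; Y_{q−1})`. -/
def Fof (A : MAction M G) (F : M → G) (l : List M) : G :=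
  Fseq A F l.reverse

/-- The interaction term `F(;_{i∈I} X_i)`, with arguments in increasing index order. -/
def Fint (A : MAction M G) (F : M → G) {ι : Type*} [LinearOrder ι] (X : ι → M)
    (I : Finset ι) : G :=
  Fof A F ((I.sort (· ≤ ·)).map X)

/-- The `F`-independence relation: `X ⊥_F Y | Z` iff `Z.F(X; Y) = 0`, where
`F(X; Y) = F(X) − Y.F(X)` is the second-order term. -/
def Findep (A : MAction M G) (F : M → G) (X Y Z : M) : Prop :=
  A.act Z (F X - A.act Y (F X)) = 0

/-!
Conditioned on an idempotent `t`, an interaction term with `t` among its arguments vanishes: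
`t.(F s - t.F s) = 0`. Hence `F`-independence obeys the semigraphoid rules, and mutual
independence of the classes given `X_J` passes to two indices of distinct classes of an atom `W`,
given everything outside `W`; as `F(;W)` is symmetric, it is an iterated difference of that pair
term, so it vanishes.

Conversely, the chain rule gives `F(xy; …) = F(x; y; …) + y.F(x; …) + x.F(y; …)`. Splitting the
classes one index at a time writes their interaction, conditioned on everything outside them, as a
sum of atoms meeting every class, all of which lie in `IM(K)`. Then `F(…) = F(…; y) + y.F(…)`
takes the other classes out of the conditioning one at a time, down to pairwise independence given
`X_J`, which contraction assembles into mutual independence.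
-/

namespace MAction

variable (A : MAction M G)

theorem act_zero (x : M) : A.act x 0 = 0 := by
  simpa using A.act_add x 0 0

theorem act_sub (x : M) (g h : G) : A.act x (g - h) = A.act x g - A.act x h := by
  rw [eq_sub_iff_add_eq, ← A.act_add, sub_add_cancel]

theorem act_comm (x y : M) (g : G) : A.act x (A.act y g) = A.act y (A.act x g) := by
  rw [A.act_mul, A.act_mul, mul_comm]

end MAction

section Interaction

variable {A : MAction M G} {F : M → G}

theorem Fseq_cons_of_ne_nil (y : M) {l : List M} (hl : l ≠ []) :
    Fseq A F (y :: l) = Fseq A F l - A.act y (Fseq A F l) := by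
  obtain ⟨z, l, rfl⟩ := List.exists_cons_of_ne_nil hl
  rfl

theorem Fof_append_singleton (y : M) {l : List M} (hl : l ≠ []) :
    Fof A F (l ++ [y]) = Fof A F l - A.act y (Fof A F l) := by
  simp only [Fof, List.reverse_append, List.reverse_singleton, List.singleton_append]
  exact Fseq_cons_of_ne_nil y (by simpa using hl)

theorem act_Fof_append_eq_zero {z : M} {l : List M} (hl : l ≠ [])
    (h : A.act z (Fof A F l) = 0) (l' : List M) : A.act z (Fof A F (l ++ l')) = 0 := by
  induction l' using List.reverseRecOn with
  | nil => simpa using h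
  | append_singleton l' y ih =>
    rw [← List.append_assoc, Fof_append_singleton y (by simp [hl]), A.act_sub, A.act_comm, ih,
      A.act_zero, sub_zero]

theorem Fof_pair_mul_right (s t w : M) :
    Fof A F [s, t * w] = Fof A F [s, t] + A.act t (Fof A F [s, w]) := by
  change F s - A.act (t * w) (F s) = F s - A.act t (F s) + A.act t (F s - A.act w (F s))
  rw [A.act_sub, A.act_mul]
  abel

theorem act_Fof_pair_self {t : M} (ht : IsIdempotentElem t) (s : M) :
    A.act t (Fof A F [s, t]) = 0 := by
  change A.act t (F s - A.act t (F s)) = 0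
  rw [A.act_sub, A.act_mul, ht.eq, sub_self]

theorem ChainRule.map_one (hF : ChainRule A F) : F 1 = 0 := by
  simpa [A.act_one] using hF 1 1

theorem ChainRule.Fof_pair_comm (hF : ChainRule A F) (x y : M) :
    Fof A F [x, y] = Fof A F [y, x] := by
  change F x - A.act y (F x) = F y - A.act x (F y)
  rw [sub_eq_sub_iff_add_eq_add, ← hF, ← hF, mul_comm]

theorem ChainRule.Fseq_perm (hF : ChainRule A F) {l₁ l₂ : List M} (h : l₁.Perm l₂) :
    Fseq A F l₁ = Fseq A F l₂ := by
  induction h with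
  | nil => rfl
  | @cons x l₁ l₂ h ih =>
    rcases eq_or_ne l₁ [] with rfl | hl₁
    · rw [h.nil_eq]
    · rw [Fseq_cons_of_ne_nil x hl₁, Fseq_cons_of_ne_nil x (fun h₂ => hl₁ ((h₂ ▸ h).eq_nil)), ih]
  | swap x y l =>
    rcases eq_or_ne l [] with rfl | hl
    · exact hF.Fof_pair_comm x y
    · simp only [Fseq_cons_of_ne_nil _ hl, Fseq_cons_of_ne_nil _ (List.cons_ne_nil _ _),
        A.act_sub, A.act_comm x y]
      abel
  | trans _ _ ih₁ ih₂ => exact ih₁.trans ih₂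

theorem ChainRule.Fof_perm (hF : ChainRule A F) {l₁ l₂ : List M} (h : l₁.Perm l₂) :
    Fof A F l₁ = Fof A F l₂ :=
  hF.Fseq_perm ((l₁.reverse_perm.trans h).trans l₂.reverse_perm.symm)

theorem ChainRule.Fof_eq_zero_of_one_mem (hF : ChainRule A F) {l : List M} (h : (1 : M) ∈ l) :
    Fof A F l = 0 := by
  obtain ⟨s, t, rfl⟩ := List.append_of_mem h
  rw [hF.Fof_perm (List.perm_middle.trans (List.perm_append_singleton 1 (s ++ t)).symm)]
  rcases eq_or_ne (s ++ t) [] with hnil | hne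
  · rw [hnil]
    exact hF.map_one
  · rw [Fof_append_singleton 1 hne, A.act_one, sub_self]

theorem ChainRule.Fof_mul_cons (hF : ChainRule A F) (x y : M) (l : List M) :
    Fof A F (x * y :: l) =
      Fof A F (x :: y :: l) + A.act y (Fof A F (x :: l)) + A.act x (Fof A F (y :: l)) := by
  induction l using List.reverseRecOn with
  | nil =>
    change F (x * y) = F x - A.act y (F x) + A.act y (F x) + A.act x (F y)
    rw [hF]
    abel
  | append_singleton l z ih =>
    simp only [← List.cons_append]
    rw [Fof_append_singleton z (List.cons_ne_nil _ _), Fof_append_singleton z (List.cons_ne_nil _ _),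
      Fof_append_singleton z (List.cons_ne_nil _ _), Fof_append_singleton z (List.cons_ne_nil _ _),
      ih, A.act_add, A.act_add, A.act_sub, A.act_sub, A.act_comm z y, A.act_comm z x]
    abel

end Interaction

section Independence

variable {A : MAction M G} {F : M → G}

theorem findep_iff {x y z : M} : Findep A F x y z ↔ A.act z (Fof A F [x, y]) = 0 := Iff.rfl

theorem Findep.symm (hF : ChainRule A F) {x y z : M} (h : Findep A F x y z) :
    Findep A F y x z := by
  rw [findep_iff, hF.Fof_pair_comm]
  exact h

theorem Findep.mul_right {s t w c : M} (h₁ : Findep A F s t c) (h₂ : Findep A F s w (c * t)) :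
    Findep A F s (t * w) c := by
  rw [findep_iff] at h₁ h₂ ⊢
  rw [Fof_pair_mul_right, A.act_add, A.act_mul, h₁, h₂, add_zero]

/-- Contraction (`←`), and weak union with decomposition (`→`). -/
theorem findep_mul_right_iff {s t w c : M} (ht : IsIdempotentElem t) :
    Findep A F s (t * w) c ↔ Findep A F s t c ∧ Findep A F s w (c * t) := by
  refine ⟨fun h => ?_, fun h => h.1.mul_right h.2⟩
  rw [findep_iff, Fof_pair_mul_right, A.act_add, A.act_mul] at h
  have h₂ : A.act (c * t) (Fof A F [s, w]) = 0 :=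
    calc A.act (c * t) (Fof A F [s, w])
        = A.act t (A.act c (Fof A F [s, t]) + A.act (c * t) (Fof A F [s, w])) := by
          rw [A.act_add, A.act_comm, act_Fof_pair_self ht, A.act_zero, zero_add, A.act_mul,
            mul_left_comm, ht.eq]
      _ = 0 := by rw [h, A.act_zero]
  exact ⟨by rwa [h₂, add_zero] at h, h₂⟩

theorem Findep.weak_union_decomposition (hF : ChainRule A F) {s₁ s₂ s₃ t₁ t₂ t₃ c : M}
    (hs₁ : IsIdempotentElem s₁) (hs₂ : IsIdempotentElem s₂) (ht₁ : IsIdempotentElem t₁)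
    (ht₂ : IsIdempotentElem t₂) (h : Findep A F (s₂ * (s₁ * s₃)) (t₂ * (t₁ * t₃)) c) :
    Findep A F s₁ t₁ (c * t₂ * s₂) := by
  have h' := ((findep_mul_right_iff ht₁).1 ((findep_mul_right_iff ht₂).1 h).2).1.symm hF
  exact ((findep_mul_right_iff hs₁).1 ((findep_mul_right_iff hs₂).1 h').2).1.symm hF

section Idempotent

variable {ι : Type*} [DecidableEq ι] {X : ι → M}

theorem prod_mul_prod_of_subset (hidem : ∀ x : M, x * x = x) {S T : Finset ι} (h : S ⊆ T) :
    (∏ a ∈ S, X a) * ∏ a ∈ T, X a = ∏ a ∈ T, X a := by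
  rw [← Finset.prod_sdiff h, mul_left_comm, hidem]

theorem prod_mul_prod_eq_prod_union (hidem : ∀ x : M, x * x = x) (S T : Finset ι) :
    (∏ a ∈ S, X a) * ∏ a ∈ T, X a = ∏ a ∈ S ∪ T, X a := by
  rw [← Finset.prod_union_inter]
  exact (mul_comm _ _).trans (prod_mul_prod_of_subset hidem Finset.inter_subset_union)

theorem Findep.prod_of_subset (hidem : ∀ x : M, x * x = x) (hF : ChainRule A F)
    {S T C S₁ S₂ T₁ T₂ : Finset ι} (hS₁ : S₁ ⊆ S) (hS₂ : S₂ ⊆ S) (hT₁ : T₁ ⊆ T) (hT₂ : T₂ ⊆ T)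
    (h : Findep A F (∏ a ∈ S, X a) (∏ a ∈ T, X a) (∏ a ∈ C, X a)) :
    Findep A F (∏ a ∈ S₁, X a) (∏ a ∈ T₁, X a) (∏ a ∈ C ∪ T₂ ∪ S₂, X a) := by
  rw [← prod_mul_prod_eq_prod_union hidem, ← prod_mul_prod_eq_prod_union hidem]
  refine Findep.weak_union_decomposition (s₃ := ∏ a ∈ S, X a) (t₃ := ∏ a ∈ T, X a) hF
    (hidem _) (hidem _) (hidem _) (hidem _) ?_
  rwa [prod_mul_prod_of_subset hidem hS₁, prod_mul_prod_of_subset hidem hS₂,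
    prod_mul_prod_of_subset hidem hT₁, prod_mul_prod_of_subset hidem hT₂]

end Idempotent

theorem findep_prod_of_forall_pair {κ : Type*} [DecidableEq κ] (f : κ → M) (c : M)
    (h : ∀ i t (K : Finset κ), i ≠ t → i ∉ K → t ∉ K → Findep A F (f i) (f t) (c * ∏ k ∈ K, f k))
    {i : κ} {T : Finset κ} (hi : i ∉ T) : Findep A F (f i) (∏ k ∈ T, f k) c := by
  induction T using Finset.induction_on with
  | empty =>
    change A.act c (F (f i) - A.act (∏ k ∈ ∅, f k) (F (f i))) = 0
    rw [Finset.prod_empty, A.act_one, sub_self, A.act_zero]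
  | insert t T ht ih =>
    have hiT : i ∉ T := fun hiT => hi (Finset.mem_insert_of_mem hiT)
    rw [Finset.prod_insert ht, mul_comm]
    exact (ih hiT).mul_right (h i t T (fun hit => hi (hit ▸ Finset.mem_insert_self t T)) hiT ht)

end Independence

section Fint

variable {A : MAction M G} {F : M → G} {κ : Type*} [LinearOrder κ] (f : κ → M)

theorem ChainRule.Fint_eq_Fof (hF : ChainRule A F) {s : Finset κ} {l : List κ} (hl : l.Nodup)
    (hs : ∀ a, a ∈ l ↔ a ∈ s) : Fint A F f s = Fof A F (l.map f) :=
  hF.Fof_perm (((List.perm_ext_iff_of_nodup (s.sort_nodup _) hl).2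
    fun a => by rw [Finset.mem_sort, hs]).map f)

theorem ChainRule.Fint_pair (hF : ChainRule A F) {i j : κ} (hij : i ≠ j) :
    Fint A F f {i, j} = Fof A F [f i, f j] :=
  hF.Fint_eq_Fof f (l := [i, j]) (by simp [hij]) (by simp)

theorem ChainRule.Fint_insert (hF : ChainRule A F) {s : Finset κ} {m : κ} (hm : m ∉ s)
    (hs : s.Nonempty) : Fint A F f (insert m s) = Fint A F f s - A.act (f m) (Fint A F f s) := by
  rw [hF.Fint_eq_Fof f (l := s.sort (· ≤ ·) ++ [m]) (by simp [List.nodup_append, hm])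
    (by simp [or_comm]), List.map_append, List.map_singleton,
    Fof_append_singleton _ (List.ne_nil_of_length_pos (by simpa using hs.card_pos))]
  rfl

theorem ChainRule.act_Fint_eq_zero_of_findep (hF : ChainRule A F) {s : Finset κ} {a b : κ}
    (ha : a ∈ s) (hb : b ∈ s) (hab : a ≠ b) {z : M} (h : Findep A F (f a) (f b) z) :
    A.act z (Fint A F f s) = 0 := by
  rw [hF.Fint_eq_Fof f (l := a :: b :: ((s.erase a).erase b).sort (· ≤ ·)) (by simp [hab])
    (fun x => by by_cases hxa : x = a <;> by_cases hxb : x = b <;> simp_all)]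
  exact act_Fof_append_eq_zero (l := [f a, f b]) (by simp) h _

variable [Fintype κ]

/-- Each class `m` outside `I ∪ K` enters the conditioning through
`Fint f I = Fint f (insert m I) + (f m).Fint f I`. -/
theorem ChainRule.act_Fint_eq_zero_of_disjoint (hF : ChainRule A F) (c : M)
    (h : ∀ I : Finset κ, 2 ≤ I.card → A.act (c * ∏ k ∈ Iᶜ, f k) (Fint A F f I) = 0)
    {I K : Finset κ} (hIK : Disjoint I K) (hI : 2 ≤ I.card) :
    A.act (c * ∏ k ∈ K, f k) (Fint A F f I) = 0 := by
  induction hd : (I ∪ K)ᶜ.card generalizing I K with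
  | zero =>
    have hcompl : Iᶜ = K := IsCompl.compl_eq
      ⟨hIK, codisjoint_iff.2 (Finset.compl_eq_empty_iff _ |>.1 (Finset.card_eq_zero.1 hd))⟩
    exact hcompl ▸ h I hI
  | succ d ih =>
    obtain ⟨m, hm⟩ := Finset.card_pos.1 (by rw [hd]; exact d.succ_pos)
    have hmI : m ∉ I := fun hmI => Finset.mem_compl.1 hm (Finset.mem_union_left K hmI)
    have hmK : m ∉ K := fun hmK => Finset.mem_compl.1 hm (Finset.mem_union_right I hmK)
    have hcard : ((I ∪ K)ᶜ.erase m).card = d := by rw [Finset.card_erase_of_mem hm, hd]; rfl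
    have hsplit : Fint A F f I = Fint A F f (insert m I) + A.act (f m) (Fint A F f I) := by
      rw [hF.Fint_insert f hmI (Finset.card_pos.1 (by omega)), sub_add_cancel]
    rw [hsplit, A.act_add, A.act_mul, mul_assoc, mul_comm (∏ k ∈ K, f k), ← Finset.prod_insert hmK,
      ih (Finset.disjoint_insert_left.2 ⟨hmK, hIK⟩)
        (hI.trans (Finset.card_le_card (Finset.subset_insert m I)))
        (by rwa [Finset.insert_union, Finset.compl_insert]),
      ih (Finset.disjoint_insert_right.2 ⟨hmI, hIK⟩) hI
        (by rwa [Finset.union_insert, Finset.compl_insert]), add_zero]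

end Fint

section Blocks

variable {ι : Type*} [LinearOrder ι] [Fintype ι]

def atomValue (A : MAction M G) (F : M → G) (X : ι → M) (W : Finset ι) : G :=
  A.act (∏ a ∈ Finset.univ \ W, X a) (Fint A F X W)

def blockTerm (A : MAction M G) (F : M → G) (X : ι → M) (bl : List (Finset ι)) : G :=
  A.act (∏ a ∈ Finset.univ \ bl.toFinset.biUnion id, X a)
    (Fof A F (bl.map fun B => ∏ a ∈ B, X a))

variable {A : MAction M G} {F : M → G} {X : ι → M}

theorem ChainRule.blockTerm_perm (hF : ChainRule A F) {bl₁ bl₂ : List (Finset ι)}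
    (h : bl₁.Perm bl₂) : blockTerm A F X bl₁ = blockTerm A F X bl₂ := by
  rw [blockTerm, blockTerm, List.toFinset_eq_of_perm _ _ h, hF.Fof_perm (h.map _)]

theorem blockTerm_map_singleton (W : Finset ι) :
    blockTerm A F X ((W.sort (· ≤ ·)).map singleton) = atomValue A F X W := by
  have hU : ((W.sort (· ≤ ·)).map singleton).toFinset.biUnion id = W := by ext; simp
  simp [blockTerm, atomValue, hU, Function.comp_def, Fint]

theorem ChainRule.blockTerm_cons_insert (hF : ChainRule A F) {b : ι} {B : Finset ι} (hb : b ∉ B)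
    {rest : List (Finset ι)} (hR : Disjoint (insert b B) (rest.toFinset.biUnion id)) :
    blockTerm A F X (insert b B :: rest) =
      blockTerm A F X ({b} :: B :: rest) + blockTerm A F X ({b} :: rest) +
        blockTerm A F X (B :: rest) := by
  simp only [blockTerm, List.toFinset_cons, Finset.biUnion_insert, id, List.map_cons,
    Finset.prod_singleton, Finset.prod_insert hb]
  set R := rest.toFinset.biUnion id
  have hbR : b ∉ R := Finset.disjoint_left.1 hR (Finset.mem_insert_self b B)
  have hBR : Disjoint B R := hR.mono_left (Finset.subset_insert b B)
  have hcondB : Disjoint (Finset.univ \ (insert b B ∪ R)) B :=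
    Finset.disjoint_left.2 fun x hx hxB => by simp_all
  have hcondb : b ∉ Finset.univ \ (insert b B ∪ R) := by simp
  rw [hF.Fof_mul_cons, A.act_add, A.act_add, A.act_mul, A.act_mul, ← Finset.prod_union hcondB,
    mul_comm, ← Finset.prod_insert hcondb]
  congr 4 <;> ext x <;> simp only [Finset.mem_sdiff, Finset.mem_union, Finset.mem_insert,
    Finset.mem_univ, Finset.mem_singleton, true_and]
  all_goals
    have hxBR : x ∈ B → x ∉ R := fun hxB => Finset.disjoint_left.1 hBR hxB
    by_cases hxb : x = b
    · subst hxb; tauto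
    · tauto

def AtomsVanish (A : MAction M G) (F : M → G) (X : ι → M) (bl : List (Finset ι)) : Prop :=
  ∀ W ⊆ bl.toFinset.biUnion id, (∀ B ∈ bl, (W ∩ B).Nonempty) → atomValue A F X W = 0

theorem AtomsVanish.of_refine {bl bl' : List (Finset ι)} (h : AtomsVanish A F X bl)
    (hsub : ∀ C ∈ bl', ∃ D ∈ bl, C ⊆ D) (hmeet : ∀ D ∈ bl, ∃ C ∈ bl', C ⊆ D) :
    AtomsVanish A F X bl' := by
  intro W hW hWmeet
  refine h W (fun x hx => ?_) fun D hD => ?_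
  · obtain ⟨C, hC, hxC⟩ := Finset.mem_biUnion.1 (hW hx)
    obtain ⟨D, hD, hCD⟩ := hsub C (List.mem_toFinset.1 hC)
    exact Finset.mem_biUnion.2 ⟨D, List.mem_toFinset.2 hD, hCD hxC⟩
  · obtain ⟨C, hC, hCD⟩ := hmeet D hD
    exact (hWmeet C hC).mono (Finset.inter_subset_inter_left hCD)

theorem AtomsVanish.cons_of_subset {P Q : Finset ι} {rest : List (Finset ι)}
    (h : AtomsVanish A F X (Q :: rest)) (hPQ : P ⊆ Q) : AtomsVanish A F X (P :: rest) :=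
  h.of_refine
    (List.forall_mem_cons.2 ⟨⟨Q, List.mem_cons_self, hPQ⟩,
      fun C hC => ⟨C, List.mem_cons_of_mem _ hC, subset_rfl⟩⟩)
    (List.forall_mem_cons.2 ⟨⟨P, List.mem_cons_self, hPQ⟩,
      fun C hC => ⟨C, List.mem_cons_of_mem _ hC, subset_rfl⟩⟩)

theorem AtomsVanish.cons_cons_of_subset {P P' Q : Finset ι} {rest : List (Finset ι)}
    (h : AtomsVanish A F X (Q :: rest)) (hP : P ⊆ Q) (hP' : P' ⊆ Q) :
    AtomsVanish A F X (P :: P' :: rest) :=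
  h.of_refine
    (List.forall_mem_cons.2 ⟨⟨Q, List.mem_cons_self, hP⟩, List.forall_mem_cons.2
      ⟨⟨Q, List.mem_cons_self, hP'⟩, fun C hC => ⟨C, List.mem_cons_of_mem _ hC, subset_rfl⟩⟩⟩)
    (List.forall_mem_cons.2 ⟨⟨P, List.mem_cons_self, hP⟩,
      fun C hC => ⟨C, List.mem_cons_of_mem _ (List.mem_cons_of_mem _ hC), subset_rfl⟩⟩)

theorem ChainRule.blockTerm_eq_zero_of_card_le_one (hF : ChainRule A F) {bl : List (Finset ι)}
    (hdisj : bl.Pairwise Disjoint) (hcard : ∀ B ∈ bl, B.card ≤ 1) (hatom : AtomsVanish A F X bl) :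
    blockTerm A F X bl = 0 := by
  by_cases hempty : ∅ ∈ bl
  · rw [blockTerm, hF.Fof_eq_zero_of_one_mem (List.mem_map.2 ⟨∅, hempty, Finset.prod_empty⟩),
      A.act_zero]
  have hsingle : ∀ B ∈ bl, ∃ b, B = {b} := fun B hB =>
    Finset.card_eq_one.1 <| (hcard B hB).antisymm <| Finset.card_pos.2 <|
      Finset.nonempty_iff_ne_empty.2 fun h => hempty (h ▸ hB)
  set U := bl.toFinset.biUnion id
  have hperm : bl.Perm ((U.sort (· ≤ ·)).map singleton) := by
    refine (List.perm_ext_iff_of_nodup ?_ ((U.sort_nodup _).map Finset.singleton_injective)).2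
      fun B => ?_
    · exact hdisj.imp_of_mem fun hB _ hBC hBC' => hempty <| by
        subst hBC'
        rwa [(Finset.disjoint_self_iff_empty _).1 hBC] at hB
    simp only [List.mem_map, Finset.mem_sort, U, Finset.mem_biUnion, List.mem_toFinset, id]
    constructor
    · intro hB
      obtain ⟨b, rfl⟩ := hsingle B hB
      exact ⟨b, ⟨{b}, hB, Finset.mem_singleton_self b⟩, rfl⟩
    · rintro ⟨a, ⟨C, hC, haC⟩, rfl⟩
      obtain ⟨c, rfl⟩ := hsingle C hC
      rwa [Finset.mem_singleton.1 haC]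
  rw [hF.blockTerm_perm hperm, blockTerm_map_singleton]
  refine hatom U subset_rfl fun B hB => ?_
  obtain ⟨b, rfl⟩ := hsingle B hB
  exact ⟨b, Finset.mem_inter.2 ⟨Finset.mem_biUnion.2
    ⟨{b}, List.mem_toFinset.2 hB, Finset.mem_singleton_self b⟩, Finset.mem_singleton_self b⟩⟩

theorem ChainRule.blockTerm_eq_zero (hF : ChainRule A F) (bl : List (Finset ι))
    (hdisj : bl.Pairwise Disjoint) (hatom : AtomsVanish A F X bl) : blockTerm A F X bl = 0 := by
  induction hμ : (bl.map fun B => B.card - 1).sum using Nat.strong_induction_on generalizing bl with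
  | _ μ ih =>
  by_cases hcard : ∀ B ∈ bl, B.card ≤ 1
  · exact hF.blockTerm_eq_zero_of_card_le_one hdisj hcard hatom
  push Not at hcard
  obtain ⟨B, hB, hB2⟩ := hcard
  obtain ⟨b, hb⟩ := Finset.card_pos.1 (by omega : 0 < B.card)
  set B' := B.erase b
  set rest := bl.erase B
  have hB' : b ∉ B' := Finset.notMem_erase b B
  have hB'card : B'.card = B.card - 1 := Finset.card_erase_of_mem hb
  have hperm : bl.Perm (insert b B' :: rest) := Finset.insert_erase hb ▸ List.perm_cons_erase hB
  have hμ' : μ = B.card - 1 + (rest.map fun B => B.card - 1).sum := by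
    rw [← hμ, (hperm.map _).sum_eq, List.map_cons, List.sum_cons, Finset.insert_erase hb]
  obtain ⟨hBrest, hrest⟩ := List.pairwise_cons.1 ((hperm.pairwise_iff fun h => h.symm).1 hdisj)
  have hatom' : AtomsVanish A F X (insert b B' :: rest) :=
    hatom.of_refine (fun C hC => ⟨C, hperm.symm.subset hC, subset_rfl⟩)
      fun D hD => ⟨D, hperm.subset hD, subset_rfl⟩
  have hbB : {b} ⊆ insert b B' := Finset.singleton_subset_iff.2 (Finset.mem_insert_self b B')
  have hb_rest : ∀ C ∈ rest, Disjoint {b} C := fun C hC => (hBrest C hC).mono_left hbB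
  have hB'_rest : ∀ C ∈ rest, Disjoint B' C := fun C hC =>
    (hBrest C hC).mono_left (Finset.subset_insert b B')
  rw [hF.blockTerm_perm hperm, hF.blockTerm_cons_insert hB'
      ((Finset.disjoint_biUnion_right _ _ _).2 fun C hC => hBrest C (List.mem_toFinset.1 hC)),
    ih _ (by simp only [List.map_cons, List.sum_cons, Finset.card_singleton]; omega) _
      (List.pairwise_cons.2 ⟨List.forall_mem_cons.2 ⟨Finset.disjoint_singleton_left.2 hB', hb_rest⟩,
        List.pairwise_cons.2 ⟨hB'_rest, hrest⟩⟩)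
      (hatom'.cons_cons_of_subset hbB (Finset.subset_insert b B')) rfl,
    ih _ (by simp only [List.map_cons, List.sum_cons, Finset.card_singleton]; omega) _
      (List.pairwise_cons.2 ⟨hb_rest, hrest⟩)
      (hatom'.cons_of_subset hbB) rfl,
    ih _ (by simp only [List.map_cons, List.sum_cons]; omega) _
      (List.pairwise_cons.2 ⟨hB'_rest, hrest⟩)
      (hatom'.cons_of_subset (Finset.subset_insert b B')) rfl, add_zero, add_zero]

end Blocks

section Partition

variable {A : MAction M G} {F : M → G} {ι κ : Type*} [LinearOrder ι] [Fintype ι] [LinearOrder κ]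
  {X : ι → M} {J : Finset ι} {L : κ → Finset ι}

theorem act_Fint_classes_eq_zero_of_atomValue (hF : ChainRule A F)
    (hLL : ∀ i j, i ≠ j → Disjoint (L i) (L j))
    (h3 : ∀ I : Finset κ, 2 ≤ I.card → ∀ W : κ → Finset ι,
      (∀ i ∈ I, W i ⊆ L i ∧ (W i).Nonempty) → atomValue A F X (I.biUnion W) = 0)
    {I : Finset κ} (hI : 2 ≤ I.card) :
    A.act (∏ a ∈ Finset.univ \ I.biUnion L, X a) (Fint A F (fun i => ∏ a ∈ L i, X a) I) = 0 := by
  have hU : ((I.sort (· ≤ ·)).map L).toFinset.biUnion id = I.biUnion L := by ext; simp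
  have hblocks : blockTerm A F X ((I.sort (· ≤ ·)).map L) =
      A.act (∏ a ∈ Finset.univ \ I.biUnion L, X a) (Fint A F (fun i => ∏ a ∈ L i, X a) I) := by
    rw [blockTerm, hU, List.map_map]
    rfl
  rw [← hblocks]
  refine hF.blockTerm_eq_zero _ (List.pairwise_map.2 ((I.sort_nodup _).imp (hLL _ _)))
    fun W hW hmeet => ?_
  have hWeq : W = I.biUnion fun i => W ∩ L i := by
    ext x
    refine ⟨fun hx => ?_, fun hx => ?_⟩
    · obtain ⟨B, hB, hxB⟩ := Finset.mem_biUnion.1 (hW hx)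
      obtain ⟨i, hi, rfl⟩ := List.mem_map.1 (List.mem_toFinset.1 hB)
      exact Finset.mem_biUnion.2 ⟨i, (Finset.mem_sort _).1 hi, Finset.mem_inter.2 ⟨hx, hxB⟩⟩
    · obtain ⟨i, -, hx⟩ := Finset.mem_biUnion.1 hx
      exact (Finset.mem_inter.1 hx).1
  rw [hWeq]
  exact h3 I hI _ fun i hi => ⟨Finset.inter_subset_right,
    hmeet (L i) (List.mem_map.2 ⟨i, (Finset.mem_sort _).2 hi, rfl⟩)⟩

variable [Fintype κ]

theorem atomValue_eq_zero_of_findep (hidem : ∀ x : M, x * x = x) (hF : ChainRule A F)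
    (hLL : ∀ i j, i ≠ j → Disjoint (L i) (L j)) (hJL : ∀ i, Disjoint J (L i))
    (hcover : J ∪ Finset.univ.biUnion L = Finset.univ)
    (h1 : ∀ i, Findep A F (∏ a ∈ L i, X a) (∏ j ∈ Finset.univ.erase i, ∏ a ∈ L j, X a)
      (∏ a ∈ J, X a))
    {I : Finset κ} (hI : 2 ≤ I.card) {W : κ → Finset ι}
    (hW : ∀ i ∈ I, W i ⊆ L i ∧ (W i).Nonempty) : atomValue A F X (I.biUnion W) = 0 := by
  obtain ⟨i, hi, j, hj, hij⟩ := Finset.one_lt_card.1 hI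
  obtain ⟨a, ha⟩ := (hW i hi).2
  obtain ⟨b, hb⟩ := (hW j hj).2
  set V := I.biUnion W
  set T := (Finset.univ.erase i).biUnion L
  have hJV : Disjoint J V := (Finset.disjoint_biUnion_right _ _ _).2 fun k hk =>
    (hJL k).mono_right (hW k hk).1
  have hcond : J ∪ (T \ V) ∪ (L i \ V) = Finset.univ \ V := by
    ext x
    simp only [Finset.mem_union, Finset.mem_sdiff, Finset.mem_univ, true_and]
    constructor
    · rintro ((hxJ | ⟨-, hxV⟩) | ⟨-, hxV⟩)
      exacts [Finset.disjoint_left.1 hJV hxJ, hxV, hxV]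
    · intro hxV
      rcases Finset.mem_union.1 (hcover ▸ Finset.mem_univ x) with hxJ | hxL
      · exact Or.inl (Or.inl hxJ)
      obtain ⟨k, -, hxk⟩ := Finset.mem_biUnion.1 hxL
      by_cases hki : k = i
      · exact Or.inr ⟨hki ▸ hxk, hxV⟩
      · exact Or.inl (Or.inr ⟨Finset.mem_biUnion.2 ⟨k, Finset.mem_erase.2 ⟨hki, Finset.mem_univ k⟩,
          hxk⟩, hxV⟩)
  have hT := h1 i
  rw [← Finset.prod_biUnion fun k _ l _ hkl => hLL k l hkl] at hT
  have hab := hT.prod_of_subset hidem hF (S₁ := {a}) (T₁ := {b}) (S₂ := L i \ V) (T₂ := T \ V)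
    (Finset.singleton_subset_iff.2 ((hW i hi).1 ha)) Finset.sdiff_subset
    (Finset.singleton_subset_iff.2 (Finset.mem_biUnion.2
      ⟨j, Finset.mem_erase.2 ⟨hij.symm, Finset.mem_univ j⟩, (hW j hj).1 hb⟩)) Finset.sdiff_subset
  rw [Finset.prod_singleton, Finset.prod_singleton, hcond] at hab
  exact hF.act_Fint_eq_zero_of_findep X (Finset.mem_biUnion.2 ⟨i, hi, ha⟩)
    (Finset.mem_biUnion.2 ⟨j, hj, hb⟩)
    (fun hab => Finset.disjoint_left.1 (hLL i j hij) ((hW i hi).1 ha) (hab ▸ (hW j hj).1 hb)) hab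

theorem findep_of_act_Fint_classes (hF : ChainRule A F)
    (hLL : ∀ i j, i ≠ j → Disjoint (L i) (L j)) (hJL : ∀ i, Disjoint J (L i))
    (hcover : J ∪ Finset.univ.biUnion L = Finset.univ)
    (h2 : ∀ I : Finset κ, 2 ≤ I.card →
      A.act (∏ a ∈ Finset.univ \ I.biUnion L, X a) (Fint A F (fun i => ∏ a ∈ L i, X a) I) = 0)
    (i : κ) :
    Findep A F (∏ a ∈ L i, X a) (∏ j ∈ Finset.univ.erase i, ∏ a ∈ L j, X a) (∏ a ∈ J, X a) := by
  have hcompl : ∀ I : Finset κ,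
      ∏ a ∈ Finset.univ \ I.biUnion L, X a = (∏ a ∈ J, X a) * ∏ k ∈ Iᶜ, ∏ a ∈ L k, X a := by
    intro I
    have hset : Finset.univ \ I.biUnion L = J ∪ Iᶜ.biUnion L := by
      ext x
      simp only [Finset.mem_sdiff, Finset.mem_univ, true_and, Finset.mem_union,
        Finset.mem_biUnion, Finset.mem_compl, not_exists, not_and]
      constructor
      · intro hx
        rcases Finset.mem_union.1 (hcover ▸ Finset.mem_univ x) with hxJ | hxL
        · exact Or.inl hxJ
        obtain ⟨k, -, hxk⟩ := Finset.mem_biUnion.1 hxL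
        exact Or.inr ⟨k, fun hk => hx k hk hxk, hxk⟩
      · rintro (hxJ | ⟨k, hk, hxk⟩) l hl hxl
        · exact Finset.disjoint_left.1 (hJL l) hxJ hxl
        · exact Finset.disjoint_left.1 (hLL k l fun hkl => hk (hkl ▸ hl)) hxk hxl
    rw [hset, Finset.prod_union ((Finset.disjoint_biUnion_right _ _ _).2 fun k _ => hJL k),
      Finset.prod_biUnion fun k _ l _ hkl => hLL k l hkl]
  refine findep_prod_of_forall_pair (A := A) (F := F) (fun k => ∏ a ∈ L k, X a) (∏ a ∈ J, X a)
    (fun i t K hit hiK htK => ?_) (Finset.notMem_erase i _)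
  have h := hF.act_Fint_eq_zero_of_disjoint _ _ (fun I hI => hcompl I ▸ h2 I hI)
    (I := {i, t}) (K := K) (by simp [hiK, htK]) (Finset.card_pair hit).ge
  rwa [hF.Fint_pair _ hit] at h

end Partition

theorem FCMI_characterization_general
    {M G : Type*} [CommMonoid M] [AddCommGroup G]
    (hidem : ∀ x : M, x * x = x)
    (A : MAction M G) (F : M → G) (hF : ChainRule A F)
    (n q : ℕ) (X : Fin n → M)
    (J : Finset (Fin n)) (L : Fin q → Finset (Fin n))
    (hLL : ∀ i j : Fin q, i ≠ j → Disjoint (L i) (L j))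
    (hJL : ∀ i : Fin q, Disjoint J (L i))
    (hcover : J ∪ Finset.univ.biUnion L = Finset.univ) :
    List.TFAE
      [ ∀ i : Fin q,
          Findep A F (∏ a ∈ L i, X a) (∏ j ∈ Finset.univ.erase i, ∏ a ∈ L j, X a)
            (∏ a ∈ J, X a),
        ∀ I : Finset (Fin q), 2 ≤ I.card →
          A.act (∏ a ∈ (J ∪ Finset.univ.biUnion L) \ I.biUnion L, X a)
            (Fint A F (fun i => ∏ a ∈ L i, X a) I) = 0,
        ∀ I : Finset (Fin q), 2 ≤ I.card → ∀ W : Fin q → Finset (Fin n),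
          (∀ i ∈ I, W i ⊆ L i ∧ (W i).Nonempty) →
          A.act (∏ a ∈ (J ∪ Finset.univ.biUnion L) \ I.biUnion W, X a)
            (Fint A F X (I.biUnion W)) = 0,
        ∀ Wset : Finset (Fin n),
          (∃ I : Finset (Fin q), 2 ≤ I.card ∧ ∃ W : Fin q → Finset (Fin n),
            (∀ i ∈ I, W i ⊆ L i ∧ (W i).Nonempty) ∧ Wset = I.biUnion W) →
          A.act (∏ a ∈ Finset.univ \ Wset, X a) (Fint A F X Wset) = 0 ] := by
  simp only [hcover]
  tfae_have 1 → 3 := fun h1 _ hI _ hW =>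
    atomValue_eq_zero_of_findep hidem hF hLL hJL hcover h1 hI hW
  tfae_have 3 ↔ 4 := ⟨fun h3 => by rintro _ ⟨I, hI, W, hW, rfl⟩; exact h3 I hI W hW,
    fun h4 I hI W hW => h4 _ ⟨I, hI, W, hW, rfl⟩⟩
  tfae_have 3 → 2 := fun h3 _ hI => act_Fint_classes_eq_zero_of_atomValue hF hLL h3 hI
  tfae_have 2 → 1 := findep_of_act_Fint_classes hF hLL hJL hcover
  tfae_finish

/-- Let `K = (J, L₁, …, L_q)` be a conditional partition of `[n]` with
`q ≥ 2` and `L = L₁ ∪ … ∪ L_q`. Then the following are equivalent: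
(1) `K` induces an `F`-FCMI, i.e. `X_{L₁}, …, X_{L_q}` are mutually `F`-independent given
`X_J`; (2) `X_{J∪L∖L_I}.F(;_{i∈I} X_{Lᵢ}) = 0` for all `I ⊆ [q]` with `|I| ≥ 2`;
(3) `X_{J∪L∖W_I}.F(;_{w∈W_I} X_w) = 0` for all such `I` and all families of nonempty
`Wᵢ ⊆ Lᵢ` (`i ∈ I`); (4) `X_{[n]∖W}.F(;_{w∈W} X_w) = 0` for every atom `p_W ∈ IM(K)`. -/
theorem FCMI_characterization
    {M G : Type*} [CommMonoid M] [AddCommGroup G]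
    (hidem : ∀ x : M, x * x = x)
    (A : MAction M G) (F : M → G) (hF : ChainRule A F)
    (n q : ℕ) (hq : 2 ≤ q) (X : Fin n → M)
    (J : Finset (Fin n)) (L : Fin q → Finset (Fin n))
    (hLL : ∀ i j : Fin q, i ≠ j → Disjoint (L i) (L j))
    (hJL : ∀ i : Fin q, Disjoint J (L i))
    (hcover : J ∪ Finset.univ.biUnion L = Finset.univ) :
    List.TFAE
      [ ∀ i : Fin q,
          Findep A F (∏ a ∈ L i, X a) (∏ j ∈ Finset.univ.erase i, ∏ a ∈ L j, X a)
            (∏ a ∈ J, X a),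
        ∀ I : Finset (Fin q), 2 ≤ I.card →
          A.act (∏ a ∈ (J ∪ Finset.univ.biUnion L) \ I.biUnion L, X a)
            (Fint A F (fun i => ∏ a ∈ L i, X a) I) = 0,
        ∀ I : Finset (Fin q), 2 ≤ I.card → ∀ W : Fin q → Finset (Fin n),
          (∀ i ∈ I, W i ⊆ L i ∧ (W i).Nonempty) →
          A.act (∏ a ∈ (J ∪ Finset.univ.biUnion L) \ I.biUnion W, X a)
            (Fint A F X (I.biUnion W)) = 0,
        ∀ Wset : Finset (Fin n),
          (∃ I : Finset (Fin q), 2 ≤ I.card ∧ ∃ W : Fin q → Finset (Fin n),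
            (∀ i ∈ I, W i ⊆ L i ∧ (W i).Nonempty) ∧ Wset = I.biUnion W) →
          A.act (∏ a ∈ Finset.univ \ Wset, X a) (Fint A F X Wset) = 0 ] :=
  FCMI_characterization_general hidem A F hF n q X J L hLL hJL hcover

end AMRF
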